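/- The fraction field of the invariant ring R̃^g is generated over ℂ by the five elements y₁², y₂/y₁, y₃/y₁, x₂/x₁, x₃/x₁. -/
import Mathlib


set_option synthInstance.maxHeartbeats 1000000

open MvPolynomial

noncomputable section

open MvPolynomial

noncomputable section

/-- `R̃ = ℂ[y₁,y₂,y₃,x₁,x₂,x₃]/(y₁²-x₁³+1, y₂²-x₂³+1, y₃²-x₃³+1)`, with the `y`'s
indexed by `Sum.inl` and the `x`'s by `Sum.inr`. -/
abbrev Rt : Type :=
  MvPolynomial (Fin 3 ⊕ Fin 3) ℂ ⧸
    Ideal.span {p : MvPolynomial (Fin 3 ⊕ Fin 3) ℂ |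
      ∃ m : Fin 3, p = X (Sum.inl m) ^ 2 - X (Sum.inr m) ^ 3 + 1}

def yv (m : Fin 3) : Rt := Ideal.Quotient.mk _ (X (Sum.inl m))

def xv (m : Fin 3) : Rt := Ideal.Quotient.mk _ (X (Sum.inr m))

/-- ω = (-1 + √-3)/2, a primitive cube root of unity. -/
def ω : ℂ := (-1 + Real.sqrt 3 * Complex.I) / 2

set_option maxHeartbeats 1000000

lemma homega : ω ^ 2 + ω + 1 = 0 := by
  have h3 : ((Real.sqrt 3 : ℝ) : ℂ) ^ 2 = 3 := by
    rw [← Complex.ofReal_pow, Real.sq_sqrt (by norm_num : (0:ℝ) ≤ 3)]; norm_num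
  have hI : Complex.I ^ 2 = -1 := Complex.I_sq
  rw [ω]
  linear_combination (((Real.sqrt 3 : ℝ) : ℂ) ^ 2 / 4) * hI - (1/4 : ℂ) * h3

lemma omega_ne_zero : ω ≠ 0 := by
  intro h
  have := homega
  rw [h] at this
  norm_num at this

lemma omega_cube : ω ^ 3 = 1 := by linear_combination (ω - 1) * homega

-- evaluation map showing yv 0, xv 0 ≠ 0
def tval : ℂ := ((2:ℝ) ^ ((3:ℝ)⁻¹) : ℝ)

lemma tval_cube : tval ^ 3 = 2 := by
  have : ((2:ℝ) ^ ((3:ℝ)⁻¹)) ^ (3:ℕ) = 2 := by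
    rw [← Real.rpow_natCast ((2:ℝ) ^ ((3:ℝ)⁻¹)) 3, ← Real.rpow_mul (by norm_num)]
    norm_num
  rw [tval, ← Complex.ofReal_pow, this]; norm_num

lemma tval_ne_zero : tval ≠ 0 := by
  rw [tval]
  simp only [ne_eq, Complex.ofReal_eq_zero]
  positivity

def evmap : Rt →+* ℂ :=
  Ideal.Quotient.lift _
    ((aeval (Sum.elim (fun _ : Fin 3 => (1:ℂ)) (fun _ : Fin 3 => tval))).toRingHom)
    (by
      intro a ha
      rw [← RingHom.mem_ker]
      refine Ideal.span_le.mpr ?_ ha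
      rintro p ⟨m, rfl⟩
      simp only [SetLike.mem_coe, RingHom.mem_ker, AlgHom.toRingHom_eq_coe, RingHom.coe_coe,
        map_add, map_sub, map_pow, aeval_X, Sum.elim_inl, Sum.elim_inr, map_one]
      rw [tval_cube]; ring)

lemma yv_ne_zero : yv 0 ≠ 0 := by
  intro h
  have : evmap (yv 0) = 0 := by rw [h]; exact map_zero _
  rw [yv] at this
  simp [evmap, Ideal.Quotient.lift_mk] at this

lemma xv_ne_zero : xv 0 ≠ 0 := by
  intro h
  have : evmap (xv 0) = 0 := by rw [h]; exact map_zero _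
  rw [xv] at this
  simp [evmap, Ideal.Quotient.lift_mk] at this
  exact tval_ne_zero this

lemma rel0 : xv 0 ^ 3 = yv 0 ^ 2 + 1 := by
  have h : (Ideal.Quotient.mk _ (X (Sum.inl (0:Fin 3)) ^ 2 - X (Sum.inr (0:Fin 3)) ^ 3 + 1) : Rt) = 0 := by
    rw [Ideal.Quotient.eq_zero_iff_mem]
    exact Ideal.subset_span ⟨0, rfl⟩
  rw [map_add, map_sub, map_pow, map_pow, map_one] at h
  rw [show (Ideal.Quotient.mk _ (X (Sum.inl (0:Fin 3))) : Rt) = yv 0 from rfl,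
      show (Ideal.Quotient.mk _ (X (Sum.inr (0:Fin 3))) : Rt) = xv 0 from rfl] at h
  linear_combination -h

section Aux
variable [IsDomain Rt]
set_option linter.unusedSectionVars false

local notation "F" => FractionRing Rt
local notation "ι" => algebraMap Rt (FractionRing Rt)

def Kf : Subfield (FractionRing Rt) :=
  Subfield.closure
    (Set.range (algebraMap ℂ (FractionRing Rt)) ∪
      {(algebraMap Rt (FractionRing Rt) (yv 0)) ^ 2,
       algebraMap Rt (FractionRing Rt) (yv 1) / algebraMap Rt (FractionRing Rt) (yv 0),
       algebraMap Rt (FractionRing Rt) (yv 2) / algebraMap Rt (FractionRing Rt) (yv 0),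
       algebraMap Rt (FractionRing Rt) (xv 1) / algebraMap Rt (FractionRing Rt) (xv 0),
       algebraMap Rt (FractionRing Rt) (xv 2) / algebraMap Rt (FractionRing Rt) (xv 0)})

lemma iY_ne : ι (yv 0) ≠ 0 := fun h => yv_ne_zero ((map_eq_zero_iff _ (IsFractionRing.injective Rt (FractionRing Rt))).mp h)
lemma iX_ne : ι (xv 0) ≠ 0 := fun h => xv_ne_zero ((map_eq_zero_iff _ (IsFractionRing.injective Rt (FractionRing Rt))).mp h)

lemma memC (c : ℂ) : algebraMap ℂ (FractionRing Rt) c ∈ Kf :=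
  Subfield.subset_closure (Or.inl ⟨c, rfl⟩)

lemma memY2 : (ι (yv 0)) ^ 2 ∈ Kf := Subfield.subset_closure (Or.inr (by left; rfl))
lemma memR1 : ι (yv 1) / ι (yv 0) ∈ Kf := Subfield.subset_closure (Or.inr (by right; left; rfl))
lemma memR2 : ι (yv 2) / ι (yv 0) ∈ Kf := Subfield.subset_closure (Or.inr (by right; right; left; rfl))
lemma memS1 : ι (xv 1) / ι (xv 0) ∈ Kf := Subfield.subset_closure (Or.inr (by right; right; right; left; rfl))
lemma memS2 : ι (xv 2) / ι (xv 0) ∈ Kf := Subfield.subset_closure (Or.inr (by right; right; right; right; rfl))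

lemma relF : (ι (xv 0)) ^ 3 = (ι (yv 0)) ^ 2 + 1 := by
  rw [← map_pow, rel0, map_add, map_pow, map_one]

lemma memX3 : (ι (xv 0)) ^ 3 ∈ Kf := by
  rw [relF]; exact Subfield.add_mem _ memY2 (Subfield.one_mem _)

/-- elements expressible as K-combinations of 1, Y, X, X², YX, YX². -/
def InS (a : FractionRing Rt) : Prop :=
  ∃ c : Fin 2 → Fin 3 → FractionRing Rt, (∀ i j, c i j ∈ Kf) ∧
    a = c 0 0 + c 1 0 * ι (yv 0) + c 0 1 * ι (xv 0) + c 0 2 * (ι (xv 0))^2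
      + c 1 1 * ι (yv 0) * ι (xv 0) + c 1 2 * ι (yv 0) * (ι (xv 0))^2

lemma InS_of_mem {a : FractionRing Rt} (h : a ∈ Kf) : InS a := by
  refine ⟨![![a, 0, 0], ![0, 0, 0]], fun i j => ?_, by
    simp only [Matrix.cons_val_zero, Matrix.cons_val_one, Matrix.head_cons, Matrix.cons_val_two, Matrix.tail_cons]
    ring⟩
  fin_cases i <;> fin_cases j <;>
    simp only [Matrix.cons_val_zero, Matrix.cons_val_one, Matrix.head_cons, Matrix.cons_val_two, Matrix.tail_cons] <;>
    first | exact h | exact Subfield.zero_mem _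

lemma InS.add {a b : FractionRing Rt} (ha : InS a) (hb : InS b) : InS (a + b) := by
  obtain ⟨c, hc, rfl⟩ := ha
  obtain ⟨d, hd, rfl⟩ := hb
  exact ⟨fun i j => c i j + d i j, fun i j => Subfield.add_mem _ (hc i j) (hd i j), by ring⟩

lemma InS.smul {k a : FractionRing Rt} (hk : k ∈ Kf) (ha : InS a) : InS (k * a) := by
  obtain ⟨c, hc, rfl⟩ := ha
  exact ⟨fun i j => k * c i j, fun i j => Subfield.mul_mem _ hk (hc i j), by ring⟩

lemma InS.mulY {a : FractionRing Rt} (ha : InS a) : InS (a * ι (yv 0)) := by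
  obtain ⟨c, hc, rfl⟩ := ha
  refine ⟨![![(ι (yv 0))^2 * c 1 0, (ι (yv 0))^2 * c 1 1, (ι (yv 0))^2 * c 1 2],
           ![c 0 0, c 0 1, c 0 2]], fun i j => ?_, by
    simp [Matrix.cons_val_zero, Matrix.cons_val_one]
    ring⟩
  fin_cases i <;> fin_cases j <;>
    simp only [Matrix.cons_val_zero, Matrix.cons_val_one, Matrix.head_cons, Matrix.cons_val_two, Matrix.tail_cons] <;>
    first
      | exact Subfield.mul_mem _ memY2 (hc _ _)
      | exact hc _ _

lemma InS.mulX {a : FractionRing Rt} (ha : InS a) : InS (a * ι (xv 0)) := by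
  obtain ⟨c, hc, rfl⟩ := ha
  refine ⟨![![(ι (xv 0))^3 * c 0 2, c 0 0, c 0 1],
           ![(ι (xv 0))^3 * c 1 2, c 1 0, c 1 1]], fun i j => ?_, by
    simp [Matrix.cons_val_zero, Matrix.cons_val_one]
    ring⟩
  fin_cases i <;> fin_cases j <;>
    simp only [Matrix.cons_val_zero, Matrix.cons_val_one, Matrix.head_cons, Matrix.cons_val_two, Matrix.tail_cons] <;>
    first
      | exact Subfield.mul_mem _ memX3 (hc _ _)
      | exact hc _ _

lemma InS.mul {a b : FractionRing Rt} (ha : InS a) (hb : InS b) : InS (a * b) := by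
  obtain ⟨c, hc, rfl⟩ := hb
  have h1 : InS (c 0 0 * a) := ha.smul (hc 0 0)
  have h2 : InS (c 1 0 * a * ι (yv 0)) := (ha.smul (hc 1 0)).mulY
  have h3 : InS (c 0 1 * a * ι (xv 0)) := (ha.smul (hc 0 1)).mulX
  have h4 : InS (c 0 2 * a * ι (xv 0) * ι (xv 0)) := ((ha.smul (hc 0 2)).mulX).mulX
  have h5 : InS (c 1 1 * a * ι (yv 0) * ι (xv 0)) := ((ha.smul (hc 1 1)).mulY).mulX
  have h6 : InS (c 1 2 * a * ι (yv 0) * ι (xv 0) * ι (xv 0)) := (((ha.smul (hc 1 2)).mulY).mulX).mulX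
  have := ((((h1.add h2).add h3).add h4).add h5).add h6
  convert this using 1
  ring

lemma InS_yv (m : Fin 3) : InS (ι (yv m)) := by
  have h0 : InS (ι (yv 0)) :=
    ⟨![![0, 0, 0], ![1, 0, 0]], fun i j => by
      fin_cases i <;> fin_cases j <;>
        simp only [Matrix.cons_val_zero, Matrix.cons_val_one, Matrix.head_cons, Matrix.cons_val_two, Matrix.tail_cons] <;>
        first | exact Subfield.one_mem _ | exact Subfield.zero_mem _, by
      simp only [Matrix.cons_val_zero, Matrix.cons_val_one, Matrix.head_cons, Matrix.cons_val_two, Matrix.tail_cons]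
      ring⟩
  have key : ∀ (hm : ι (yv m) / ι (yv 0) ∈ Kf), InS (ι (yv m)) := by
    intro hm
    have := h0.smul hm
    rwa [div_mul_cancel₀ _ iY_ne] at this
  fin_cases m
  · exact h0
  · exact key memR1
  · exact key memR2

lemma InS_xv (m : Fin 3) : InS (ι (xv m)) := by
  have h0 : InS (ι (xv 0)) :=
    ⟨![![0, 1, 0], ![0, 0, 0]], fun i j => by
      fin_cases i <;> fin_cases j <;>
        simp only [Matrix.cons_val_zero, Matrix.cons_val_one, Matrix.head_cons, Matrix.cons_val_two, Matrix.tail_cons] <;>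
        first | exact Subfield.one_mem _ | exact Subfield.zero_mem _, by
      simp only [Matrix.cons_val_zero, Matrix.cons_val_one, Matrix.head_cons, Matrix.cons_val_two, Matrix.tail_cons]
      ring⟩
  have key : ∀ (hm : ι (xv m) / ι (xv 0) ∈ Kf), InS (ι (xv m)) := by
    intro hm
    have := h0.smul hm
    rwa [div_mul_cancel₀ _ iX_ne] at this
  fin_cases m
  · exact h0
  · exact key memS1
  · exact key memS2

lemma InS_image (r : Rt) : InS (ι r) := by
  obtain ⟨p, rfl⟩ := Ideal.Quotient.mk_surjective r
  induction p using MvPolynomial.induction_on with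
  | C c =>
      refine InS_of_mem ?_
      have : (Ideal.Quotient.mk _ (C c : MvPolynomial (Fin 3 ⊕ Fin 3) ℂ) : Rt) = algebraMap ℂ Rt c := rfl
      rw [this, ← IsScalarTower.algebraMap_apply ℂ Rt (FractionRing Rt)]
      exact memC c
  | add p q hp hq => rw [map_add, map_add]; exact hp.add hq
  | mul_X p n hp =>
      rw [map_mul, map_mul]
      refine hp.mul ?_
      cases n with
      | inl m => exact InS_yv m
      | inr m => exact InS_xv m

lemma fixedKf (e : FractionRing Rt →+* FractionRing Rt)
    (hC : ∀ c : ℂ, e (algebraMap ℂ (FractionRing Rt) c) = algebraMap ℂ (FractionRing Rt) c)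
    (hY : ∀ m : Fin 3, e (ι (yv m)) = - ι (yv m))
    (hX : ∀ m : Fin 3, e (ι (xv m)) = algebraMap ℂ (FractionRing Rt) ω * ι (xv m)) :
    ∀ z ∈ Kf, e z = z := by
  have hωne : algebraMap ℂ (FractionRing Rt) ω ≠ 0 := by
    simpa using (map_ne_zero_iff _ (RingHom.injective (algebraMap ℂ (FractionRing Rt)))).mpr omega_ne_zero
  intro z hz
  refine RingHom.eqOn_field_closure (f := e) (g := RingHom.id _) ?_ hz
  rintro w (⟨c, rfl⟩ | hw)
  · exact hC c
  · simp only [Set.mem_insert_iff, Set.mem_singleton_iff] at hw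
    rcases hw with rfl | rfl | rfl | rfl | rfl
    · simp [map_pow, hY 0]
    · simp only [map_div₀, hY 1, hY 0, RingHom.id_apply, neg_div_neg_eq]
    · simp only [map_div₀, hY 2, hY 0, RingHom.id_apply, neg_div_neg_eq]
    · simp only [map_div₀, hX 1, hX 0, RingHom.id_apply, mul_div_mul_left _ _ hωne]
    · simp only [map_div₀, hX 2, hX 0, RingHom.id_apply, mul_div_mul_left _ _ hωne]

lemma InS_fixed_mem (e : FractionRing Rt →+* FractionRing Rt)
    (hC : ∀ c : ℂ, e (algebraMap ℂ (FractionRing Rt) c) = algebraMap ℂ (FractionRing Rt) c)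
    (hY : ∀ m : Fin 3, e (ι (yv m)) = - ι (yv m))
    (hX : ∀ m : Fin 3, e (ι (xv m)) = algebraMap ℂ (FractionRing Rt) ω * ι (xv m))
    {a : FractionRing Rt} (ha : InS a) (hfix : e a = a) : a ∈ Kf := by
  obtain ⟨c, hc, h0⟩ := ha
  have hcfix : ∀ i j, e (c i j) = c i j := fun i j => fixedKf e hC hY hX _ (hc i j)
  have hωfix : e (algebraMap ℂ (FractionRing Rt) ω) = algebraMap ℂ (FractionRing Rt) ω := hC ω
  have heY : e (ι (yv 0)) = - ι (yv 0) := hY 0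
  have heX : e (ι (xv 0)) = algebraMap ℂ (FractionRing Rt) ω * ι (xv 0) := hX 0
  set Y := ι (yv 0) with hYdef
  set X := ι (xv 0) with hXdef
  set w := algebraMap ℂ (FractionRing Rt) ω with hwdef
  have homega' : w ^ 2 + w + 1 = 0 := by
    rw [hwdef, ← map_pow, ← map_add, ← map_one (algebraMap ℂ (FractionRing Rt)), ← map_add, homega, map_zero]
  have h1 : a = c 0 0 - c 1 0 * Y + w * c 0 1 * X + w^2 * c 0 2 * X^2
      - w * c 1 1 * Y * X - w^2 * c 1 2 * Y * X^2 := by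
    conv_lhs => rw [← hfix, h0]
    simp only [map_add, map_sub, map_mul, map_pow, map_neg, hcfix, hωfix, heY, heX]
    ring
  have h2 : a = c 0 0 + c 1 0 * Y + w^2 * c 0 1 * X + w^4 * c 0 2 * X^2
      + w^2 * c 1 1 * Y * X + w^4 * c 1 2 * Y * X^2 := by
    conv_lhs => rw [← hfix, h1]
    simp only [map_add, map_sub, map_mul, map_pow, map_neg, hcfix, hωfix, heY, heX]
    ring
  have h3 : a = c 0 0 - c 1 0 * Y + w^3 * c 0 1 * X + w^6 * c 0 2 * X^2
      - w^3 * c 1 1 * Y * X - w^6 * c 1 2 * Y * X^2 := by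
    conv_lhs => rw [← hfix, h2]
    simp only [map_add, map_sub, map_mul, map_pow, map_neg, hcfix, hωfix, heY, heX]
    ring
  have h4 : a = c 0 0 + c 1 0 * Y + w^4 * c 0 1 * X + w^8 * c 0 2 * X^2
      + w^4 * c 1 1 * Y * X + w^8 * c 1 2 * Y * X^2 := by
    conv_lhs => rw [← hfix, h3]
    simp only [map_add, map_sub, map_mul, map_pow, map_neg, hcfix, hωfix, heY, heX]
    ring
  have h5 : a = c 0 0 - c 1 0 * Y + w^5 * c 0 1 * X + w^10 * c 0 2 * X^2
      - w^5 * c 1 1 * Y * X - w^10 * c 1 2 * Y * X^2 := by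
    conv_lhs => rw [← hfix, h4]
    simp only [map_add, map_sub, map_mul, map_pow, map_neg, hcfix, hωfix, heY, heX]
    ring
  have h6ne : (6 : FractionRing Rt) ≠ 0 := by
    rw [show ((6 : FractionRing Rt)) = algebraMap ℂ (FractionRing Rt) 6 from (map_ofNat _ 6).symm]
    exact (map_ne_zero_iff _ (RingHom.injective _)).mpr (by norm_num)
  have key6 : 6 * a = 6 * c 0 0 := by
    linear_combination h0 + h1 + h2 + h3 + h4 + h5
      + (c 0 1 * X * (1 + w^3)
        + c 0 2 * X^2 * (1 - w + w^2 + w^6 - w^7 + w^8)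
        + c 1 1 * Y * X * (1 - 2*w + 2*w^2 - w^3)
        + c 1 2 * Y * X^2 * (1 - w - w^2 + 2*w^3 - 2*w^5 + w^6 + w^7 - w^8)) * homega'
  have key : a = c 0 0 := mul_left_cancel₀ h6ne key6
  rw [key]
  exact hc 0 0

end Aux


/-- The fraction field of the invariant ring `R̃^g` is generated over ℂ by the five
elements `y₁², y₂/y₁, y₃/y₁, x₂/x₁, x₃/x₁` (inside the fraction field of `R̃`,
which is an integral domain). -/
theorem fraction_field_invariants_generated [IsDomain Rt]
    (g : Rt ≃ₐ[ℂ] Rt)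
    (hy : ∀ m : Fin 3, g (yv m) = -yv m)
    (hx : ∀ m : Fin 3, g (xv m) = (algebraMap ℂ Rt ω) * xv m) :
    Subfield.closure
        (Set.range (algebraMap ℂ (FractionRing Rt)) ∪
          {(algebraMap Rt (FractionRing Rt) (yv 0)) ^ 2,
           algebraMap Rt (FractionRing Rt) (yv 1) / algebraMap Rt (FractionRing Rt) (yv 0),
           algebraMap Rt (FractionRing Rt) (yv 2) / algebraMap Rt (FractionRing Rt) (yv 0),
           algebraMap Rt (FractionRing Rt) (xv 1) / algebraMap Rt (FractionRing Rt) (xv 0),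
           algebraMap Rt (FractionRing Rt) (xv 2) / algebraMap Rt (FractionRing Rt) (xv 0)}) =
      Subfield.closure
        (Set.range (algebraMap ℂ (FractionRing Rt)) ∪
          (algebraMap Rt (FractionRing Rt) '' {r : Rt | g r = r})) := by
  set F := FractionRing Rt
  set ι := algebraMap Rt F with hιdef
  set e : F →+* F :=
    (IsFractionRing.ringEquivOfRingEquiv (K := F) (L := F) (g : Rt ≃+* Rt) : F →+* F) with hedef
  have hmap : ∀ r : Rt, e (ι r) = ι (g r) := fun r => by
    rw [hedef]
    exact IsFractionRing.ringEquivOfRingEquiv_algebraMap (g : Rt ≃+* Rt) r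
  have hC : ∀ c : ℂ, e (algebraMap ℂ F c) = algebraMap ℂ F c := fun c => by
    rw [IsScalarTower.algebraMap_apply ℂ Rt F, hmap, AlgEquiv.commutes]
  have hYe : ∀ m : Fin 3, e (ι (yv m)) = - ι (yv m) := fun m => by
    rw [hmap, hy, map_neg]
  have hXe : ∀ m : Fin 3, e (ι (xv m)) = algebraMap ℂ F ω * ι (xv m) := fun m => by
    rw [hmap, hx, map_mul, ← IsScalarTower.algebraMap_apply ℂ Rt F]
  show Kf = _
  apply le_antisymm
  · rw [Kf, Subfield.closure_le]
    rintro z (⟨c, rfl⟩ | hz)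
    · exact Subfield.subset_closure (Or.inl ⟨c, rfl⟩)
    · have hω3R : (algebraMap ℂ Rt ω) ^ 3 = 1 := by
        rw [← map_pow, omega_cube, map_one]
      have invY2 : g (yv 0 ^ 2) = yv 0 ^ 2 := by rw [map_pow, hy]; ring
      have memY2' : ι (yv 0 ^ 2) ∈
          Subfield.closure (Set.range (algebraMap ℂ F) ∪ (ι '' {r : Rt | g r = r})) :=
        Subfield.subset_closure (Or.inr ⟨yv 0 ^ 2, invY2, rfl⟩)
      have invX3 : g (xv 0 ^ 3) = xv 0 ^ 3 := by
        rw [map_pow, hx]; rw [mul_pow]; rw [hω3R]; ring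
      have memX3' : ι (xv 0 ^ 3) ∈
          Subfield.closure (Set.range (algebraMap ℂ F) ∪ (ι '' {r : Rt | g r = r})) :=
        Subfield.subset_closure (Or.inr ⟨xv 0 ^ 3, invX3, rfl⟩)
      simp only [Set.mem_insert_iff, Set.mem_singleton_iff] at hz
      rcases hz with rfl | rfl | rfl | rfl | rfl
      · rw [← map_pow]; exact memY2'
      · have invA : g (yv 1 * yv 0) = yv 1 * yv 0 := by rw [map_mul, hy, hy]; ring
        have : ι (yv 1) / ι (yv 0) = ι (yv 1 * yv 0) / ι (yv 0 ^ 2) := by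
          rw [map_mul, map_pow, pow_two, mul_div_mul_right _ _ iY_ne]
        rw [this]
        exact Subfield.div_mem _ (Subfield.subset_closure (Or.inr ⟨_, invA, rfl⟩)) memY2'
      · have invA : g (yv 2 * yv 0) = yv 2 * yv 0 := by rw [map_mul, hy, hy]; ring
        have : ι (yv 2) / ι (yv 0) = ι (yv 2 * yv 0) / ι (yv 0 ^ 2) := by
          rw [map_mul, map_pow, pow_two, mul_div_mul_right _ _ iY_ne]
        rw [this]
        exact Subfield.div_mem _ (Subfield.subset_closure (Or.inr ⟨_, invA, rfl⟩)) memY2'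
      · have invA : g (xv 1 * xv 0 ^ 2) = xv 1 * xv 0 ^ 2 := by
          rw [map_mul, map_pow, hx, hx]
          linear_combination (xv 1 * xv 0 ^ 2) * hω3R
        have : ι (xv 1) / ι (xv 0) = ι (xv 1 * xv 0 ^ 2) / ι (xv 0 ^ 3) := by
          rw [map_mul, map_pow, map_pow, pow_succ' (ι (xv 0)) 2,
            mul_div_mul_right _ _ (pow_ne_zero 2 iX_ne)]
        rw [this]
        exact Subfield.div_mem _ (Subfield.subset_closure (Or.inr ⟨_, invA, rfl⟩)) memX3'
      · have invA : g (xv 2 * xv 0 ^ 2) = xv 2 * xv 0 ^ 2 := by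
          rw [map_mul, map_pow, hx, hx]
          linear_combination (xv 2 * xv 0 ^ 2) * hω3R
        have : ι (xv 2) / ι (xv 0) = ι (xv 2 * xv 0 ^ 2) / ι (xv 0 ^ 3) := by
          rw [map_mul, map_pow, map_pow, pow_succ' (ι (xv 0)) 2,
            mul_div_mul_right _ _ (pow_ne_zero 2 iX_ne)]
        rw [this]
        exact Subfield.div_mem _ (Subfield.subset_closure (Or.inr ⟨_, invA, rfl⟩)) memX3'
  · rw [Subfield.closure_le]
    rintro z (⟨c, rfl⟩ | ⟨r, hr, rfl⟩)
    · exact memC c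
    · exact InS_fixed_mem e hC hYe hXe (InS_image r) (by rw [hmap, hr])

end
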